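/- For all natural numbers n, \ell, i with i \le \ell \le n: sum over k from 0 to \ell - i of C(n,k) * (-1)^(\ell - i - k) * C(\ell - k, i) = C(n - i - 1, n - \ell - 1), where binomial coefficients with negative arguments are 0, except that C(m,m) = 1 for all m, so in particular C(-1,-1) = 1 in the case i = \ell = n. -/
import Mathlib


/-- Extended binomial coefficient: `C a b = 0` for `b < 0` or `a < b`,
with the boundary convention `C (-1) (-1) = 1`. -/
def C (a b : ℤ) : ℤ :=
  if a = -1 ∧ b = -1 then 1
  else if 0 ≤ b ∧ b ≤ a then (a.toNat).choose b.toNat else 0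

lemma C_coe (a b : ℕ) : C a b = a.choose b := by
  unfold C
  rw [if_neg (by simp), ]
  by_cases h : b ≤ a
  · rw [if_pos ⟨Int.ofNat_nonneg b, by exact_mod_cast h⟩]
    simp
  · rw [if_neg (by push_neg; intro; exact_mod_cast Nat.lt_of_not_le h),
      Nat.choose_eq_zero_of_lt (Nat.lt_of_not_le h)]
    simp

/-- auxiliary sum -/
def fS (n i m : ℕ) : ℤ :=
  ∑ k ∈ Finset.range (m + 1), (-1 : ℤ) ^ k * (n.choose k) * ((m + i - k).choose i)

lemma fS_zero (n i : ℕ) : fS n i 0 = 1 := by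
  simp [fS]

lemma fS_rec1 (n i m : ℕ) : fS (n+1) i (m+1) = fS n i (m+1) - fS n i m := by
  unfold fS
  rw [Finset.sum_range_succ' _ (m+1), Finset.sum_range_succ' (fun k =>
    (-1 : ℤ) ^ k * (n.choose k) * ((m + 1 + i - k).choose i)) (m+1)]
  have h : ∀ k ∈ Finset.range (m+1),
      (-1:ℤ)^(k+1) * (((n+1).choose (k+1) : ℕ) : ℤ) * (((m+1+i-(k+1)).choose i : ℕ) : ℤ)
      = (-1:ℤ)^(k+1) * ((n.choose (k+1) : ℕ) : ℤ) * (((m+1+i-(k+1)).choose i : ℕ) : ℤ)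
        + (-((-1:ℤ)^k * ((n.choose k : ℕ) : ℤ) * (((m+i-k).choose i : ℕ) : ℤ))) := by
    intro k hk
    have h1 : m+1+i-(k+1) = m+i-k := by omega
    rw [h1, Nat.choose_succ_succ]
    push_cast
    ring
  rw [Finset.sum_congr rfl h, Finset.sum_add_distrib, Finset.sum_neg_distrib]
  simp only [Nat.choose_zero_right]
  push_cast
  ring

lemma fS_rec2 (n i m : ℕ) : fS n (i+1) (m+1) = fS n i (m+1) + fS n (i+1) m := by
  unfold fS
  have h : ∀ k ∈ Finset.range (m+2),
      (-1:ℤ)^k * ((n.choose k : ℕ) : ℤ) * (((m+1+(i+1)-k).choose (i+1) : ℕ) : ℤ)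
      = (-1:ℤ)^k * ((n.choose k : ℕ) : ℤ) * (((m+1+i-k).choose i : ℕ) : ℤ)
        + (-1:ℤ)^k * ((n.choose k : ℕ) : ℤ) * (((m+1+i-k).choose (i+1) : ℕ) : ℤ) := by
    intro k hk
    simp only [Finset.mem_range] at hk
    have h1 : m+1+(i+1)-k = (m+1+i-k) + 1 := by omega
    rw [h1, Nat.choose_succ_succ]
    push_cast
    ring
  rw [Finset.sum_congr rfl h, Finset.sum_add_distrib]
  congr 1
  rw [Finset.sum_range_succ]
  have h2 : m+1+i-(m+1) = i := by omega
  rw [h2, Nat.choose_succ_self]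
  have h3 : ∀ k ∈ Finset.range (m+1),
      (-1:ℤ)^k * ((n.choose k : ℕ) : ℤ) * (((m+1+i-k).choose (i+1) : ℕ) : ℤ)
      = (-1:ℤ)^k * ((n.choose k : ℕ) : ℤ) * (((m+(i+1)-k).choose (i+1) : ℕ) : ℤ) := by
    intro k hk
    have : m+1+i-k = m+(i+1)-k := by omega
    rw [this]
  rw [Finset.sum_congr rfl h3]
  simp

lemma fS_diag (i : ℕ) : ∀ m, fS i i m = 1 := by
  induction i with
  | zero =>
    intro m
    unfold fS
    rw [Finset.sum_eq_single 0]
    · simp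
    · intro k _ hk
      cases k with
      | zero => exact absurd rfl hk
      | succ k => simp [Nat.choose_eq_zero_of_lt]
    · simp
  | succ i ih =>
    intro m
    induction m with
    | zero => exact fS_zero _ _
    | succ m ihm =>
      rw [fS_rec2, fS_rec1, ih, ih, ihm]
      ring

lemma fS_eq (d i : ℕ) : ∀ m, fS (i+d+1) i m = (-1:ℤ)^m * (d.choose m) := by
  induction d with
  | zero =>
    intro m
    cases m with
    | zero => simp [fS_zero]
    | succ m =>
      rw [show i+0+1 = i+1 from rfl, fS_rec1, fS_diag, fS_diag,
        Nat.choose_eq_zero_of_lt (Nat.succ_pos m)]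
      ring
  | succ d ih =>
    intro m
    cases m with
    | zero => simp [fS_zero]
    | succ m =>
      rw [show i+(d+1)+1 = (i+d+1)+1 by ring, fS_rec1, ih, ih, Nat.choose_succ_succ]
      push_cast
      ring

theorem stmt_5 (n l i : ℕ) (hil : i ≤ l) (hln : l ≤ n) :
    ∑ k ∈ Finset.range (l - i + 1),
        C n k * (-1 : ℤ) ^ (l - i - k) * C ((l : ℤ) - k) i =
      C ((n : ℤ) - i - 1) ((n : ℤ) - l - 1) := by
  rcases eq_or_lt_of_le (hil.trans hln) with hin | hin
  · -- i = n, hence i = l = n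
    have hl : l = n := le_antisymm hln (hin ▸ hil)
    subst hl
    subst hin
    simp only [Nat.sub_self, zero_add, Finset.sum_range_one, Nat.cast_zero, sub_zero,
      Nat.zero_sub, pow_zero, mul_one]
    have h1 : C (i : ℤ) 0 = 1 := by
      have := C_coe i 0
      simpa using this
    have h3 : C (i : ℤ) (i : ℤ) = 1 := by rw [C_coe]; simp
    rw [h1, h3, show ((i:ℤ) - i - 1) = -1 by ring]
    simp [C]
  · -- i < n
    set m := l - i with hm
    set d := n - i - 1 with hd
    have hmd : m ≤ d + 1 := by omega
    have hlhs : ∑ k ∈ Finset.range (l - i + 1),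
        C n k * (-1 : ℤ) ^ (l - i - k) * C ((l : ℤ) - k) i
        = (-1:ℤ)^m * fS n i m := by
      unfold fS
      rw [Finset.mul_sum]
      apply Finset.sum_congr rfl
      intro k hk
      simp only [Finset.mem_range] at hk
      have hkm : k ≤ m := by omega
      have h1 : C (n : ℤ) (k : ℤ) = n.choose k := C_coe n k
      have h2 : ((l : ℤ) - k) = ((l - k : ℕ) : ℤ) := by
        have : k ≤ l := by omega
        omega
      have h3 : C ((l : ℤ) - k) (i : ℤ) = (l - k).choose i := by rw [h2, C_coe]
      have h4 : l - k = m + i - k := by omega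
      have h5 : (-1:ℤ)^(l - i - k) = (-1:ℤ)^m * (-1:ℤ)^k := by
        have h6 : m - k + k + k = m + k := by omega
        calc (-1:ℤ)^(l-i-k) = (-1:ℤ)^(m-k) * ((-1:ℤ)*(-1:ℤ))^k := by
              rw [show ((-1:ℤ)*(-1:ℤ)) = 1 by ring, one_pow, mul_one]
          _ = (-1:ℤ)^(m-k) * ((-1:ℤ)^k * (-1:ℤ)^k) := by rw [mul_pow]
          _ = (-1:ℤ)^(m+k) := by rw [← mul_assoc, ← pow_add, ← pow_add, h6]
          _ = (-1:ℤ)^m * (-1:ℤ)^k := pow_add _ _ _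
      rw [h1, h3, h4, h5]
      ring
    have hn : n = i + d + 1 := by omega
    have hfs : fS n i m = (-1:ℤ)^m * (d.choose m) := by rw [hn]; exact fS_eq d i m
    rw [hlhs, hfs, ← mul_assoc, ← mul_pow]
    rw [show ((-1:ℤ)*(-1:ℤ)) = 1 by ring, one_pow, one_mul]
    -- now RHS
    rcases eq_or_lt_of_le hln with hle | hlt
    · -- l = n
      subst hle
      have h7 : ((l:ℤ) - i - 1) = ((d:ℕ):ℤ) := by omega
      have h8 : ((l:ℤ) - l - 1) = -1 := by ring
      rw [h7, h8]
      have h9 : C ((d:ℕ):ℤ) (-1) = 0 := by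
        unfold C
        rw [if_neg (by omega), if_neg (by omega)]
      rw [h9]
      have : d < m := by omega
      rw [Nat.choose_eq_zero_of_lt this]
      simp
    · have h7 : ((n:ℤ) - i - 1) = ((d:ℕ):ℤ) := by omega
      have h8 : ((n:ℤ) - l - 1) = ((n - l - 1 : ℕ):ℤ) := by omega
      rw [h7, h8, C_coe]
      have h9 : m ≤ d := by omega
      have h10 : d - m = n - l - 1 := by omega
      rw [← h10, Nat.choose_symm h9]
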